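/- For n = 2^d, d ≥ 1, and 2 ≤ m ≤ d + 2, the K_{1,m}-substructure connectivity of FDSC_n is at least ⌊d/2⌋ + 1; that is, for any family F of fewer than ⌊d/2⌋ + 1 subgraphs of FDSC_n, each isomorphic to a connected subgraph of the star K_{1,m}, deleting the vertices of all members of F leaves FDSC_n connected (and nontrivial). -/

import Mathlib

open scoped Classical

namespace FDSC

/-- Vertices of `FDSC_n` with `n = 2^d`: binary strings of length `2^d`. -/
abbrev V (d : ℕ) : Type := Fin (2 ^ d) → Bool

/-- Bit `i` of a vertex (out-of-range bits are `false`). -/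
def get {d : ℕ} (u : V d) (i : ℕ) : Bool :=
  if h : i < 2 ^ d then u ⟨i, h⟩ else false

def ofFun {d : ℕ} (f : ℕ → Bool) : V d := fun i => f i

/-- Flip bit `i`. -/
def flip {d : ℕ} (i : ℕ) (u : V d) : V d :=
  ofFun (fun j => if j = i then !(get u j) else get u j)

/-- The two initial blocks of length `L` coincide (`m₁ = m₂`). -/
def sameHalves {d : ℕ} (L : ℕ) (u : V d) : Prop :=
  ∀ i < L, get u i = get u (i + L)

/-- Swap the two initial blocks of length `L` (`m₂ m₁ m₃`). -/
def swapHalves {d : ℕ} (L : ℕ) (u : V d) : V d :=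
  ofFun (fun i => if i < L then get u (i + L)
    else if i < 2 * L then get u (i - L) else get u i)

/-- Complement the two initial blocks of length `L` (`m̄₁ m̄₂ m₃`). -/
def complHalves {d : ℕ} (L : ℕ) (u : V d) : V d :=
  ofFun (fun i => if i < 2 * L then !(get u i) else get u i)

/-- Divide-and-swap neighbor for block length `L`. -/
noncomputable def dsNeighbor {d : ℕ} (L : ℕ) (u : V d) : V d :=
  if sameHalves L u then complHalves L u else swapHalves L u

/-- Adjacency in `FDSC_n`: the `e(1)`-edge (flip first bit), the `e(f)`-edge
(flip second bit), and the `e(2n/2^k)`-edges for `1 ≤ k ≤ d`. -/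
def PreAdj {d : ℕ} (u v : V d) : Prop :=
  u ≠ v ∧ (v = flip 0 u ∨ v = flip 1 u ∨
    ∃ k, 1 ≤ k ∧ k ≤ d ∧ v = dsNeighbor (2 ^ (d - k)) u)

/-- The folded divide-and-swap cube `FDSC_n`, `n = 2^d`. -/
noncomputable def graph (d : ℕ) : SimpleGraph (V d) where
  Adj u v := PreAdj u v ∨ PreAdj v u
  symm := ⟨fun _ _ h => h.symm⟩
  loopless := ⟨fun u h => by
    rcases h with h | h <;> exact h.1 rfl⟩

/-- Module addresses: binary strings of length `n/2 = 2^(d-1)`. -/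
abbrev W (d : ℕ) : Type := Fin (2 ^ (d - 1)) → Bool

def getW {d : ℕ} (B : W d) (i : ℕ) : Bool :=
  if h : i < 2 ^ (d - 1) then B ⟨i, h⟩ else false

/-- The vertex `A B` (inside-address `A`, module address `B`). -/
def concat {d : ℕ} (A B : W d) : V d :=
  ofFun (fun i => if i < 2 ^ (d - 1) then getW A i else getW B (i - 2 ^ (d - 1)))

/-- The module address of a vertex (its second half). -/
def secondHalf {d : ℕ} (u : V d) : W d :=
  fun i => get u ((i : ℕ) + 2 ^ (d - 1))

/-- Bitwise complement of a module address. -/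
def complW {d : ℕ} (B : W d) : W d := fun i => !(B i)

/-- The external neighbor of a vertex: the `e(n)`-edge endpoint (`k = 1`). -/
noncomputable def extNeighbor {d : ℕ} (u : V d) : V d :=
  dsNeighbor (2 ^ (d - 1)) u

/-- The star `K_{1,m}` with center `0`. -/
def star (m : ℕ) : SimpleGraph (Fin (m + 1)) where
  Adj i j := (i = 0 ∧ j ≠ 0) ∨ (j = 0 ∧ i ≠ 0)
  symm := ⟨fun _ _ h => h.symm⟩
  loopless := ⟨fun i h => by
    rcases h with ⟨h1, h2⟩ | ⟨h1, h2⟩ <;> exact h2 h1⟩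

/-- Deleting the vertex set `R` disconnects the graph or leaves a trivial graph. -/
def Disconnects {α : Type*} (G : SimpleGraph α) (R : Set α) : Prop :=
  ¬ (G.induce Rᶜ).Connected ∨ Rᶜ.Subsingleton

/-- `H`-structure connectivity: minimum number of subgraphs of `G`, each
isomorphic to `H`, whose vertex deletion disconnects `G` or leaves a trivial graph. -/
noncomputable def structConn {α β : Type*} (G : SimpleGraph α) (H : SimpleGraph β) : ℕ :=
  sInf { k | ∃ F : Finset G.Subgraph, F.card = k ∧
    (∀ S ∈ F, Nonempty (S.coe ≃g H)) ∧
    Disconnects G (⋃ S ∈ F, S.verts) }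

/-- `H`-substructure connectivity: members are isomorphic to connected subgraphs of `H`. -/
noncomputable def substructConn {α β : Type*} (G : SimpleGraph α) (H : SimpleGraph β) : ℕ :=
  sInf { k | ∃ F : Finset G.Subgraph, F.card = k ∧
    (∀ S ∈ F, S.coe.Connected ∧ ∃ H' : H.Subgraph, Nonempty (S.coe ≃g H'.coe)) ∧
    Disconnects G (⋃ S ∈ F, S.verts) }

section Dev

variable {d : ℕ}

lemma get_ofFun (f : ℕ → Bool) (i : ℕ) :
    get (ofFun f : V d) i = if i < 2 ^ d then f i else false := by
  unfold get ofFun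
  split <;> rfl

lemma get_eq_false {u : V d} {i : ℕ} (h : ¬ i < 2 ^ d) : get u i = false := by
  unfold get; rw [dif_neg h]

lemma get_fin (u : V d) (j : Fin (2 ^ d)) : get u (j : ℕ) = u j := by
  unfold get; rw [dif_pos j.isLt]

lemma vext {u v : V d} (h : ∀ i, get u i = get v i) : u = v := by
  funext j
  have := h j
  rwa [get_fin, get_fin] at this

lemma getW_fin (B : W d) (j : Fin (2 ^ (d - 1))) : getW B (j : ℕ) = B j := by
  unfold getW; rw [dif_pos j.isLt]

lemma wext {A B : W d} (h : ∀ i, getW A i = getW B i) : A = B := by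
  funext j
  have := h j
  rwa [getW_fin, getW_fin] at this

lemma getW_eq_false {B : W d} {i : ℕ} (h : ¬ i < 2 ^ (d - 1)) : getW B i = false := by
  unfold getW; rw [dif_neg h]

lemma half_lt (hd : 1 ≤ d) : 2 ^ (d - 1) < 2 ^ d :=
  Nat.pow_lt_pow_right one_lt_two (by omega)

lemma two_half (hd : 1 ≤ d) : 2 ^ (d - 1) + 2 ^ (d - 1) = 2 ^ d := by
  have : 2 * 2 ^ (d - 1) = 2 ^ (d - 1 + 1) := (pow_succ' 2 (d - 1)).symm
  have h2 : d - 1 + 1 = d := by omega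
  rw [h2] at this
  omega

lemma get_flip (j : ℕ) (u : V d) (i : ℕ) :
    get (flip j u) i = if i = j ∧ i < 2 ^ d then !(get u i) else get u i := by
  unfold flip
  rw [get_ofFun]
  by_cases h : i < 2 ^ d
  · simp only [h, if_true, and_true]
  · rw [if_neg h, get_eq_false h, if_neg (by tauto)]

lemma get_swap {L : ℕ} (hL : 2 * L ≤ 2 ^ d) (u : V d) (i : ℕ) :
    get (swapHalves L u) i = if i < L then get u (i + L)
      else if i < 2 * L then get u (i - L) else get u i := by
  unfold swapHalves
  rw [get_ofFun]
  by_cases h : i < 2 ^ d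
  · rw [if_pos h]
  · rw [if_neg h, get_eq_false h, if_neg (by omega), if_neg (by omega)]

lemma get_compl {L : ℕ} (hL : 2 * L ≤ 2 ^ d) (u : V d) (i : ℕ) :
    get (complHalves L u) i = if i < 2 * L then !(get u i) else get u i := by
  unfold complHalves
  rw [get_ofFun]
  by_cases h : i < 2 ^ d
  · rw [if_pos h]
  · rw [if_neg h, get_eq_false h, if_neg (by omega)]

lemma flip_ne {j : ℕ} (hj : j < 2 ^ d) (u : V d) : flip j u ≠ u := by
  intro h
  have : get (flip j u) j = get u j := by rw [h]
  rw [get_flip, if_pos ⟨rfl, hj⟩] at this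
  exact Bool.not_ne_self _ this

lemma flip_flip {j : ℕ} (u : V d) : flip j (flip j u) = u := by
  apply vext
  intro i
  simp only [get_flip]
  by_cases h : i = j ∧ i < 2 ^ d
  · rw [if_pos h, if_pos h, Bool.not_not]
  · rw [if_neg h, if_neg h]

lemma sameHalves_swap {L : ℕ} (hL : 2 * L ≤ 2 ^ d) (u : V d) :
    sameHalves L (swapHalves L u) ↔ sameHalves L u := by
  unfold sameHalves
  constructor <;> intro h i hi <;>
  · have hh := h i hi
    simp only [get_swap hL] at *
    split_ifs at * <;>
      first
        | omega
        | assumption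
        | (exact hh.symm)
        | (simp only [Nat.add_sub_cancel] at *; exact hh.symm)
        | (simp only [Nat.add_sub_cancel] at *; exact hh)

lemma sameHalves_compl {L : ℕ} (hL : 2 * L ≤ 2 ^ d) (u : V d) :
    sameHalves L (complHalves L u) ↔ sameHalves L u := by
  unfold sameHalves
  constructor <;> intro h i hi <;>
  · have hh := h i hi
    simp only [get_compl hL] at *
    rw [if_pos (by omega), if_pos (by omega)] at *
    first
      | (simpa using hh)
      | (rw [hh])

lemma swap_swap {L : ℕ} (hL : 2 * L ≤ 2 ^ d) (u : V d) :
    swapHalves L (swapHalves L u) = u := by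
  apply vext
  intro i
  simp only [get_swap hL]
  split_ifs <;>
    first
      | rfl
      | omega
      | (congr 1; omega)

lemma compl_compl' {L : ℕ} (hL : 2 * L ≤ 2 ^ d) (u : V d) :
    complHalves L (complHalves L u) = u := by
  apply vext
  intro i
  simp only [get_compl hL]
  split_ifs <;> simp

lemma ds_invol {L : ℕ} (hL : 2 * L ≤ 2 ^ d) (u : V d) :
    dsNeighbor L (dsNeighbor L u) = u := by
  unfold dsNeighbor
  by_cases h : sameHalves L u
  · rw [if_pos h, if_pos ((sameHalves_compl hL u).2 h), compl_compl' hL]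
  · rw [if_neg h, if_neg (fun hh => h ((sameHalves_swap hL u).1 hh)), swap_swap hL]

end Dev
section Dev2

variable {d : ℕ}

/-- The first half of a vertex, as a module address. -/
def fh {d : ℕ} (u : V d) : W d := fun i => get u (i : ℕ)

lemma getW_fh (u : V d) (i : ℕ) :
    getW (fh u) i = if i < 2 ^ (d - 1) then get u i else false := by
  unfold getW fh
  split <;> rfl

lemma getW_secondHalf (u : V d) (i : ℕ) :
    getW (secondHalf u) i =
      if i < 2 ^ (d - 1) then get u (i + 2 ^ (d - 1)) else false := by
  unfold getW secondHalf
  split <;> rfl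

lemma getW_eq_get (B : W d) (i : ℕ) : getW B i = get (show V (d - 1) from B) i := rfl

lemma get_complW (B : W d) (i : ℕ) :
    get (show V (d - 1) from complW B) i =
      if i < 2 ^ (d - 1) then !(getW B i) else false := by
  unfold get complW getW
  split_ifs <;> rfl

lemma get_concat (hd : 1 ≤ d) (A B : W d) (i : ℕ) :
    get (concat A B) i =
      if i < 2 ^ (d - 1) then getW A i else getW B (i - 2 ^ (d - 1)) := by
  have h2 := two_half hd
  unfold concat
  rw [get_ofFun]
  by_cases h : i < 2 ^ d
  · rw [if_pos h]
  · rw [if_neg h, if_neg (by omega), getW_eq_false (by omega)]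

lemma fh_concat (hd : 1 ≤ d) (A B : W d) : fh (concat A B) = A := by
  apply wext
  intro i
  rw [getW_fh]
  by_cases h : i < 2 ^ (d - 1)
  · rw [if_pos h, get_concat hd, if_pos h]
  · rw [if_neg h, getW_eq_false h]

lemma sh_concat (hd : 1 ≤ d) (A B : W d) : secondHalf (concat A B) = B := by
  have h2 := two_half hd
  apply wext
  intro i
  rw [getW_secondHalf]
  by_cases h : i < 2 ^ (d - 1)
  · rw [if_pos h, get_concat hd, if_neg (by omega)]
    simp only [Nat.add_sub_cancel]
  · rw [if_neg h, getW_eq_false h]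

lemma concat_fh_sh (hd : 1 ≤ d) (u : V d) : concat (fh u) (secondHalf u) = u := by
  have h2 := two_half hd
  apply vext
  intro i
  rw [get_concat hd]
  by_cases h : i < 2 ^ (d - 1)
  · rw [if_pos h, getW_fh, if_pos h]
  · rw [if_neg h, getW_secondHalf]
    by_cases h' : i - 2 ^ (d - 1) < 2 ^ (d - 1)
    · rw [if_pos h']
      congr 1
      omega
    · rw [if_neg h', get_eq_false (by omega)]

lemma concat_inj (hd : 1 ≤ d) {A B A' B' : W d}
    (h : concat A B = concat A' B') : A = A' ∧ B = B' := by
  constructor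
  · rw [← fh_concat hd A B, h, fh_concat hd]
  · rw [← sh_concat hd A B, h, sh_concat hd]

lemma flip_concat (hd : 1 ≤ d) {j : ℕ} (hj : j < 2 ^ (d - 1)) (A B : W d) :
    flip j (concat A B) = concat (flip j (A : V (d - 1))) B := by
  have h2 := two_half hd
  apply vext
  intro i
  simp only [get_concat hd, getW_eq_get, get_flip]
  split_ifs <;> first | rfl | omega | (congr 1; omega) | (exact (get_eq_false (by omega)).symm) | (exact get_eq_false (by omega)) | (exact (get_eq_false (d := d - 1) (by omega)).symm) | (exact get_eq_false (d := d - 1) (by omega)) | (rw [get_eq_false (d := d - 1) (by omega), get_eq_false (d := d - 1) (by omega)]) | (rw [get_eq_false (by omega), get_eq_false (by omega)]) | simp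

lemma sameHalves_concat_small (hd : 1 ≤ d) {L : ℕ} (hL : 2 * L ≤ 2 ^ (d - 1))
    (A B : W d) :
    sameHalves L (concat A B) ↔ sameHalves L (A : V (d - 1)) := by
  unfold sameHalves
  apply forall_congr'
  intro i
  apply imp_congr_right
  intro hi
  rw [get_concat hd, get_concat hd, if_pos (by omega), if_pos (by omega)]
  rfl

lemma swap_concat_small (hd : 1 ≤ d) {L : ℕ} (hL : 2 * L ≤ 2 ^ (d - 1))
    (A B : W d) :
    swapHalves L (concat A B) = concat (swapHalves L (A : V (d - 1))) B := by
  have h2 := two_half hd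
  apply vext
  intro i
  simp only [get_concat hd, getW_eq_get, get_swap (show 2 * L ≤ 2 ^ d by omega),
    get_swap hL]
  split_ifs <;> first | rfl | omega | (congr 1; omega) | (exact (get_eq_false (by omega)).symm) | (exact get_eq_false (by omega)) | (exact (get_eq_false (d := d - 1) (by omega)).symm) | (exact get_eq_false (d := d - 1) (by omega)) | (rw [get_eq_false (d := d - 1) (by omega), get_eq_false (d := d - 1) (by omega)]) | (rw [get_eq_false (by omega), get_eq_false (by omega)]) | simp

lemma compl_concat_small (hd : 1 ≤ d) {L : ℕ} (hL : 2 * L ≤ 2 ^ (d - 1))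
    (A B : W d) :
    complHalves L (concat A B) = concat (complHalves L (A : V (d - 1))) B := by
  have h2 := two_half hd
  apply vext
  intro i
  simp only [get_concat hd, getW_eq_get, get_compl (show 2 * L ≤ 2 ^ d by omega),
    get_compl hL]
  split_ifs <;> first | rfl | omega | (congr 1; omega) | (exact (get_eq_false (by omega)).symm) | (exact get_eq_false (by omega)) | (exact (get_eq_false (d := d - 1) (by omega)).symm) | (exact get_eq_false (d := d - 1) (by omega)) | (rw [get_eq_false (d := d - 1) (by omega), get_eq_false (d := d - 1) (by omega)]) | (rw [get_eq_false (by omega), get_eq_false (by omega)]) | simp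

lemma ds_concat_small (hd : 1 ≤ d) {L : ℕ} (hL : 2 * L ≤ 2 ^ (d - 1))
    (A B : W d) :
    dsNeighbor L (concat A B) = concat (dsNeighbor L (A : V (d - 1))) B := by
  unfold dsNeighbor
  by_cases h : sameHalves L (A : V (d - 1))
  · rw [if_pos ((sameHalves_concat_small hd hL A B).2 h), if_pos h,
      compl_concat_small hd hL]
  · rw [if_neg (fun hh => h ((sameHalves_concat_small hd hL A B).1 hh)), if_neg h,
      swap_concat_small hd hL]

lemma sameHalves_half (hd : 1 ≤ d) (A B : W d) :
    sameHalves (2 ^ (d - 1)) (concat A B) ↔ A = B := by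
  have h2 := two_half hd
  unfold sameHalves
  constructor
  · intro h
    apply wext
    intro i
    by_cases hi : i < 2 ^ (d - 1)
    · have := h i hi
      rw [get_concat hd, get_concat hd, if_pos hi, if_neg (by omega)] at this
      simpa using this
    · rw [getW_eq_false hi, getW_eq_false hi]
  · intro h i hi
    rw [get_concat hd, get_concat hd, if_pos hi, if_neg (by omega), h]
    simp

lemma complW_concat (hd : 1 ≤ d) (A B : W d) :
    complHalves (2 ^ (d - 1)) (concat A B) = concat (complW A) (complW B) := by
  have h2 := two_half hd
  apply vext
  intro i
  simp only [get_concat hd, getW_eq_get, get_complW,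
    get_compl (show 2 * 2 ^ (d - 1) ≤ 2 ^ d by omega)]
  split_ifs <;> first | rfl | omega | (congr 1; omega) | (exact (get_eq_false (by omega)).symm) | (exact get_eq_false (by omega)) | (exact (get_eq_false (d := d - 1) (by omega)).symm) | (exact get_eq_false (d := d - 1) (by omega)) | (rw [get_eq_false (d := d - 1) (by omega), get_eq_false (d := d - 1) (by omega)]) | (rw [get_eq_false (by omega), get_eq_false (by omega)]) | simp

lemma swap_half_concat (hd : 1 ≤ d) (A B : W d) :
    swapHalves (2 ^ (d - 1)) (concat A B) = concat B A := by
  have h2 := two_half hd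
  apply vext
  intro i
  simp only [get_concat hd, getW_eq_get,
    get_swap (show 2 * 2 ^ (d - 1) ≤ 2 ^ d by omega)]
  split_ifs <;> first | rfl | omega | (congr 1; omega) | (exact (get_eq_false (by omega)).symm) | (exact get_eq_false (by omega)) | (exact (get_eq_false (d := d - 1) (by omega)).symm) | (exact get_eq_false (d := d - 1) (by omega)) | (rw [get_eq_false (d := d - 1) (by omega), get_eq_false (d := d - 1) (by omega)]) | (rw [get_eq_false (by omega), get_eq_false (by omega)]) | simp

lemma ext_concat (hd : 1 ≤ d) (A B : W d) :
    extNeighbor (concat A B) =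
      if A = B then concat (complW A) (complW B) else concat B A := by
  unfold extNeighbor dsNeighbor
  by_cases h : A = B
  · rw [if_pos ((sameHalves_half hd A B).2 h), if_pos h, complW_concat hd]
  · rw [if_neg (fun hh => h ((sameHalves_half hd A B).1 hh)), if_neg h,
      swap_half_concat hd]

lemma complW_ne (hd : 1 ≤ d) (B : W d) : complW B ≠ B := by
  intro h
  have h0 : (0 : ℕ) < 2 ^ (d - 1) := Nat.pow_pos (by norm_num)
  have := congrFun h ⟨0, h0⟩
  simp [complW] at this

lemma sh_ext_ne (hd : 1 ≤ d) (u : V d) :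
    secondHalf (extNeighbor u) ≠ secondHalf u := by
  have hu := concat_fh_sh hd u
  rw [← hu, ext_concat hd]
  by_cases h : fh u = secondHalf u
  · rw [if_pos h, sh_concat hd, sh_concat hd]
    exact complW_ne hd _
  · rw [if_neg h, sh_concat hd, sh_concat hd]
    exact h

lemma ext_invol (hd : 1 ≤ d) (u : V d) :
    extNeighbor (extNeighbor u) = u := by
  unfold extNeighbor
  exact ds_invol (by rw [two_mul, two_half hd]) u

lemma ext_ne (hd : 1 ≤ d) (u : V d) : extNeighbor u ≠ u := by
  intro h
  exact sh_ext_ne hd u (by rw [h])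

lemma adj_ext (hd : 1 ≤ d) (u : V d) : (graph d).Adj u (extNeighbor u) := by
  left
  exact ⟨(ext_ne hd u).symm, Or.inr (Or.inr ⟨1, le_refl 1, hd, rfl⟩)⟩

end Dev2
section Dev3

variable {d : ℕ}

lemma one_lt_half (hd2 : 2 ≤ d) : 1 < 2 ^ (d - 1) := by
  calc 1 < 2 ^ 1 := by norm_num
  _ ≤ 2 ^ (d - 1) := Nat.pow_le_pow_right (by norm_num) (by omega)

lemma zero_lt_half : 0 < 2 ^ (d - 1) := Nat.pow_pos (by norm_num)

lemma twoL_le_half {k : ℕ} (hk2 : 2 ≤ k) (hkd : k ≤ d) :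
    2 * 2 ^ (d - k) ≤ 2 ^ (d - 1) := by
  have : 2 * 2 ^ (d - k) = 2 ^ (d - k + 1) := (pow_succ' 2 (d - k)).symm
  rw [this]
  exact Nat.pow_le_pow_right (by norm_num) (by omega)

lemma exp_shift {k : ℕ} (hk : 1 ≤ k) (hkd : k ≤ d) :
    2 ^ (d - k) = 2 ^ ((d - 1) - (k - 1)) := by
  congr 1
  omega

lemma preadj_concat (hd2 : 2 ≤ d) (A A' B : W d) :
    PreAdj (concat A B) (concat A' B) ↔ PreAdj (d := d - 1) A A' := by
  have hd : 1 ≤ d := by omega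
  constructor
  · rintro ⟨hne, hedge⟩
    refine ⟨fun h => hne (by rw [h]), ?_⟩
    rcases hedge with h | h | ⟨k, hk1, hkd, h⟩
    · left
      rw [flip_concat hd zero_lt_half] at h
      exact ((concat_inj hd h).1)
    · right; left
      rw [flip_concat hd (one_lt_half hd2)] at h
      exact ((concat_inj hd h).1)
    · rcases Nat.lt_or_ge k 2 with hk | hk
      · -- k = 1 : external edge, impossible since second halves agree
        exfalso
        have hk1' : k = 1 := by omega
        subst hk1'
        have hsh : secondHalf (concat A' B) = B := sh_concat hd _ _
        have heq : concat A' B = extNeighbor (concat A B) := h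
        rw [heq] at hsh
        exact sh_ext_ne hd (concat A B) (by rw [hsh, sh_concat hd])
      · right; right
        refine ⟨k - 1, by omega, by omega, ?_⟩
        rw [ds_concat_small hd (twoL_le_half hk hkd)] at h
        rw [← exp_shift hk1 hkd]
        exact (concat_inj hd h).1
  · rintro ⟨hne, hedge⟩
    refine ⟨fun h => hne (concat_inj hd h).1, ?_⟩
    rcases hedge with h | h | ⟨k, hk1, hkd, h⟩
    · left
      rw [flip_concat hd zero_lt_half, h]
    · right; left
      rw [flip_concat hd (one_lt_half hd2), h]
    · right; right
      refine ⟨k + 1, by omega, by omega, ?_⟩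
      have h2L : 2 * 2 ^ (d - (k + 1)) ≤ 2 ^ (d - 1) := twoL_le_half (by omega) (by omega)
      rw [ds_concat_small hd h2L]
      have : (2 : ℕ) ^ (d - (k + 1)) = 2 ^ ((d - 1) - k) := by congr 1; omega
      rw [this, h]

lemma adj_concat (hd2 : 2 ≤ d) (A A' B : W d) :
    (graph d).Adj (concat A B) (concat A' B) ↔ (graph (d - 1)).Adj A A' := by
  show _ ∨ _ ↔ _ ∨ _
  rw [preadj_concat hd2, preadj_concat hd2]

lemma sh_flip (hd : 1 ≤ d) {j : ℕ} (hj : j < 2 ^ (d - 1)) (u : V d) :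
    secondHalf (flip j u) = secondHalf u := by
  conv_lhs => rw [← concat_fh_sh hd u]
  rw [flip_concat hd hj, sh_concat hd]

lemma sh_ds_small (hd : 1 ≤ d) {L : ℕ} (hL : 2 * L ≤ 2 ^ (d - 1)) (u : V d) :
    secondHalf (dsNeighbor L u) = secondHalf u := by
  conv_lhs => rw [← concat_fh_sh hd u]
  rw [ds_concat_small hd hL, sh_concat hd]

/-- Any edge either stays in a module or goes to the external neighbor. -/
lemma preadj_dichotomy (hd2 : 2 ≤ d) {u v : V d} (h : PreAdj u v) :
    v = extNeighbor u ∨ secondHalf v = secondHalf u := by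
  have hd : 1 ≤ d := by omega
  rcases h.2 with h' | h' | ⟨k, hk1, hkd, h'⟩
  · right; rw [h', sh_flip hd zero_lt_half]
  · right; rw [h', sh_flip hd (one_lt_half hd2)]
  · rcases Nat.lt_or_ge k 2 with hk | hk
    · left
      have : k = 1 := by omega
      subst this
      rw [h']; rfl
    · right
      rw [h', sh_ds_small hd (twoL_le_half hk hkd)]

lemma adj_cross (hd2 : 2 ≤ d) {u v : V d}
    (hne : secondHalf v ≠ secondHalf u) (h : (graph d).Adj u v) :
    v = extNeighbor u := by
  have hd : 1 ≤ d := by omega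
  rcases h with h | h
  · rcases preadj_dichotomy hd2 h with h' | h'
    · exact h'
    · exact absurd h' hne
  · rcases preadj_dichotomy hd2 h with h' | h'
    · rw [h', ext_invol hd]
    · exact absurd h'.symm hne

lemma adj_dichotomy (hd2 : 2 ≤ d) {u v : V d} (h : (graph d).Adj u v) :
    v = extNeighbor u ∨ secondHalf v = secondHalf u := by
  by_cases hs : secondHalf v = secondHalf u
  · right; exact hs
  · left; exact adj_cross hd2 hs h

/-- The explicit (over)estimate of the neighborhood. -/
noncomputable def nbrFinset (d : ℕ) (c : V d) : Finset (V d) :=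
  {flip 0 c, flip 1 c} ∪
    (Finset.range d).image (fun k => dsNeighbor (2 ^ (d - (k + 1))) c)

lemma adj_mem_nbr (hd : 1 ≤ d) {c y : V d} (h : (graph d).Adj c y) :
    y ∈ nbrFinset d c := by
  have key : ∀ w, PreAdj c w → w ∈ nbrFinset d c := by
    rintro w ⟨-, h' | h' | ⟨k, hk1, hkd, h'⟩⟩
    · subst h'; simp [nbrFinset]
    · subst h'; simp [nbrFinset]
    · subst h'
      apply Finset.mem_union_right
      apply Finset.mem_image.2
      exact ⟨k - 1, Finset.mem_range.2 (by omega),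
        by rw [Nat.sub_add_cancel hk1]⟩
  rcases h with h | h
  · exact key y h
  · -- PreAdj y c : use involutions
    rcases h.2 with h' | h' | ⟨k, hk1, hkd, h'⟩
    · have : y = flip 0 c := by rw [h', flip_flip]
      subst this; simp [nbrFinset]
    · have : y = flip 1 c := by rw [h', flip_flip]
      subst this; simp [nbrFinset]
    · have h2L : 2 * 2 ^ (d - k) ≤ 2 ^ d := by
        have : 2 * 2 ^ (d - k) = 2 ^ (d - k + 1) := (pow_succ' 2 (d - k)).symm
        rw [this]
        exact Nat.pow_le_pow_right (by norm_num) (by omega)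
      have : y = dsNeighbor (2 ^ (d - k)) c := by rw [h', ds_invol h2L]
      subst this
      apply Finset.mem_union_right
      apply Finset.mem_image.2
      exact ⟨k - 1, Finset.mem_range.2 (by omega),
        by rw [Nat.sub_add_cancel hk1]⟩

lemma card_nbr_le (c : V d) : (nbrFinset d c).card ≤ d + 2 := by
  unfold nbrFinset
  calc ({flip 0 c, flip 1 c} ∪ _ : Finset (V d)).card
      ≤ ({flip 0 c, flip 1 c} : Finset (V d)).card + _ := Finset.card_union_le _ _
  _ ≤ 2 + d := by
      gcongr
      · exact Finset.card_le_two
      · calc _ ≤ (Finset.range d).card := Finset.card_image_le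
          _ = d := Finset.card_range d
  _ = d + 2 := by omega

end Dev3
section Dev4

variable {d : ℕ}

/-- A "cell": a center together with a finite set of (intended) neighbours. -/
abbrev Cell (d : ℕ) := V d × Finset (V d)

def cverts (p : Cell d) : Finset (V d) := insert p.1 p.2

def cwt (p : Cell d) : ℕ := if p.2 = ∅ then 1 else 2

def CellsValid (d : ℕ) (l : List (Cell d)) : Prop :=
  ∀ p ∈ l, ∀ y ∈ p.2, (graph d).Adj p.1 y

def Rf (l : List (Cell d)) : Finset (V d) := l.foldr (fun p s => cverts p ∪ s) ∅

def Wt (l : List (Cell d)) : ℕ := (l.map cwt).sum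

@[simp] lemma Rf_nil : Rf ([] : List (Cell d)) = ∅ := rfl

@[simp] lemma Rf_cons (p : Cell d) (l : List (Cell d)) :
    Rf (p :: l) = cverts p ∪ Rf l := rfl

@[simp] lemma Wt_nil : Wt ([] : List (Cell d)) = 0 := rfl

@[simp] lemma Wt_cons (p : Cell d) (l : List (Cell d)) :
    Wt (p :: l) = cwt p + Wt l := rfl

lemma cwt_pos (p : Cell d) : 1 ≤ cwt p := by
  unfold cwt; split <;> omega

lemma cwt_le_two (p : Cell d) : cwt p ≤ 2 := by
  unfold cwt; split <;> omega

lemma mem_Rf {l : List (Cell d)} {x : V d} :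
    x ∈ Rf l ↔ ∃ p ∈ l, x ∈ cverts p := by
  induction l with
  | nil => simp
  | cons p l ih => simp [Finset.mem_union, ih]

lemma center_mem_Rf {l : List (Cell d)} {p : Cell d} (hp : p ∈ l) :
    p.1 ∈ Rf l :=
  mem_Rf.2 ⟨p, hp, Finset.mem_insert_self _ _⟩

lemma fh_inj (hd : 1 ≤ d) {x y : V d}
    (hsh : secondHalf x = secondHalf y) (h : fh x = fh y) : x = y := by
  rw [← concat_fh_sh hd x, ← concat_fh_sh hd y, h, hsh]

@[simp] lemma fh_concat' (hd : 1 ≤ d) (A B : W d) : fh (concat A B) = A :=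
  fh_concat hd A B

/-- The trace of a cell in the module `B`. -/
noncomputable def traceCell (B : W d) (p : Cell d) : Option (Cell (d - 1)) :=
  if secondHalf p.1 = B then
    some (fh p.1, (p.2.filter (fun y => secondHalf y = B)).image fh)
  else if extNeighbor p.1 ∈ p.2 ∧ secondHalf (extNeighbor p.1) = B then
    some (fh (extNeighbor p.1), ∅)
  else none

noncomputable def trace (B : W d) (l : List (Cell d)) : List (Cell (d - 1)) :=
  l.filterMap (traceCell B)

/-- Weight of the trace of one cell. -/
lemma cwt_traceCell_le (B : W d) (p : Cell d) :
    (Option.map cwt (traceCell B p)).getD 0 ≤ cwt p := by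
  unfold traceCell
  split_ifs with h1 h2
  · simp only [Option.map_some, Option.getD_some]
    unfold cwt
    split_ifs with hA hB hB <;> simp_all
  · simp only [Option.map_some, Option.getD_some]
    unfold cwt
    have : p.2 ≠ ∅ := by
      intro h
      rw [h] at h2
      exact absurd h2.1 (by simp)
    simp [this]
  · simp only [Option.map_none, Option.getD_none]
    exact Nat.zero_le _

lemma Wt_trace_le (B : W d) (l : List (Cell d)) : Wt (trace B l) ≤ Wt l := by
  induction l with
  | nil => simp [trace]
  | cons p l ih =>
      unfold trace at *
      rw [List.filterMap_cons]
      have hp := cwt_traceCell_le B p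
      cases h : traceCell B p with
      | none =>
          rw [h] at hp
          simp only [Wt_cons]
          calc Wt (List.filterMap (traceCell B) l) ≤ Wt l := ih
          _ ≤ cwt p + Wt l := by omega
      | some q =>
          rw [h] at hp
          simp only [Option.map_some, Option.getD_some] at hp
          simp only [Wt_cons]
          omega

lemma trace_valid (hd2 : 2 ≤ d) {l : List (Cell d)} (hv : CellsValid d l) :
    CellsValid (d - 1) (trace B l) := by
  have hd : 1 ≤ d := by omega
  intro q hq y hy
  rcases List.mem_filterMap.1 hq with ⟨p, hp, hpq⟩
  unfold traceCell at hpq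
  split_ifs at hpq with h1 h2
  · -- center branch
    cases hpq
    simp only [Finset.mem_image, Finset.mem_filter] at hy
    obtain ⟨y', ⟨hy'1, hy'2⟩, rfl⟩ := hy
    have hadj : (graph d).Adj p.1 y' := hv p hp y' hy'1
    have e1 : concat (fh p.1) B = p.1 := by
      conv_rhs => rw [← concat_fh_sh hd p.1]
      rw [h1]
    have e2 : concat (fh y') B = y' := by
      conv_rhs => rw [← concat_fh_sh hd y']
      rw [hy'2]
    rw [← adj_concat hd2 _ _ B, e1, e2]
    exact hadj
  · cases hpq
    simp at hy

/-- Membership in the trace's fault set corresponds to membership in the fault set. -/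
lemma mem_trace_iff (hd2 : 2 ≤ d) {l : List (Cell d)} (hv : CellsValid d l)
    {B : W d} {x : V d} (hx : secondHalf x = B) :
    fh x ∈ Rf (trace B l) ↔ x ∈ Rf l := by
  have hd : 1 ≤ d := by omega
  constructor
  · intro h
    rcases mem_Rf.1 h with ⟨q, hq, hxq⟩
    rcases List.mem_filterMap.1 hq with ⟨p, hp, hpq⟩
    unfold traceCell at hpq
    split_ifs at hpq with h1 h2
    · cases hpq
      rcases Finset.mem_insert.1 hxq with h' | h'
      · have hxx : x = p.1 := fh_inj hd (by rw [hx, h1]) h'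
        rw [hxx]
        exact center_mem_Rf hp
      · simp only [Finset.mem_image, Finset.mem_filter] at h'
        obtain ⟨y', ⟨hy'1, hy'2⟩, hfy⟩ := h'
        have hxx : x = y' := fh_inj hd (by rw [hx, hy'2]) hfy.symm
        rw [hxx]
        exact mem_Rf.2 ⟨p, hp, Finset.mem_insert_of_mem hy'1⟩
    · cases hpq
      rcases Finset.mem_insert.1 hxq with h' | h'
      · have hxx : x = extNeighbor p.1 := fh_inj hd (by rw [hx, h2.2]) h'
        rw [hxx]
        exact mem_Rf.2 ⟨p, hp, Finset.mem_insert_of_mem h2.1⟩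
      · simp at h' 
  · intro h
    rcases mem_Rf.1 h with ⟨p, hp, hxp⟩
    rcases Finset.mem_insert.1 hxp with h' | h'
    · apply mem_Rf.2
      refine ⟨(fh p.1, (p.2.filter (fun y => secondHalf y = B)).image fh),
        List.mem_filterMap.2 ⟨p, hp, by unfold traceCell; rw [if_pos (by rw [← h']; exact hx)]⟩, ?_⟩
      rw [h']
      exact Finset.mem_insert_self _ _
    · by_cases hc : secondHalf p.1 = B
      · refine mem_Rf.2 ⟨(fh p.1, (p.2.filter (fun y => secondHalf y = B)).image fh),
          List.mem_filterMap.2 ⟨p, hp, by unfold traceCell; rw [if_pos hc]⟩, ?_⟩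
        exact Finset.mem_insert_of_mem
          (Finset.mem_image.2 ⟨x, Finset.mem_filter.2 ⟨h', hx⟩, rfl⟩)
      · have hadj : (graph d).Adj p.1 x := hv p hp x h'
        have hxext : x = extNeighbor p.1 :=
          adj_cross hd2 (fun hh => hc ((hx ▸ hh).symm)) hadj
        refine mem_Rf.2 ⟨(fh (extNeighbor p.1), ∅),
          List.mem_filterMap.2 ⟨p, hp, ?_⟩, ?_⟩
        · unfold traceCell
          rw [if_neg hc, if_pos ⟨hxext ▸ h', by rw [← hxext, hx]⟩]
        · rw [hxext]
          exact Finset.mem_insert_self _ _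

end Dev4
section Dev5

variable {d : ℕ}

def nA (l : List (Cell d)) : ℕ := (l.filter (fun p => p.2 ≠ ∅)).length
def nB (l : List (Cell d)) : ℕ := (l.filter (fun p => p.2 = ∅)).length

lemma nA_cons (p : Cell d) (l : List (Cell d)) :
    nA (p :: l) = (if p.2 = ∅ then 0 else 1) + nA l := by
  unfold nA
  rw [List.filter_cons]
  by_cases h : p.2 = ∅ <;> simp [h] <;> omega

lemma nB_cons (p : Cell d) (l : List (Cell d)) :
    nB (p :: l) = (if p.2 = ∅ then 1 else 0) + nB l := by
  unfold nB
  rw [List.filter_cons]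
  by_cases h : p.2 = ∅ <;> simp [h] <;> omega

lemma wt_eq_counts (l : List (Cell d)) : Wt l = 2 * nA l + nB l := by
  induction l with
  | nil => simp [nA, nB]
  | cons p l ih =>
      rw [Wt_cons, ih, nA_cons, nB_cons]
      unfold cwt
      split_ifs <;> omega

lemma card_cverts_le (hd : 1 ≤ d) {l : List (Cell d)} (hv : CellsValid d l)
    {p : Cell d} (hp : p ∈ l) :
    (cverts p).card ≤ if p.2 = ∅ then 1 else d + 3 := by
  by_cases h : p.2 = ∅
  · simp [cverts, h]
  · rw [if_neg h]
    have hsub : p.2 ⊆ nbrFinset d p.1 := by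
      intro y hy
      exact adj_mem_nbr hd (hv p hp y hy)
    calc (cverts p).card ≤ p.2.card + 1 := Finset.card_insert_le _ _
    _ ≤ (nbrFinset d p.1).card + 1 := Nat.add_le_add_right (Finset.card_le_card hsub) 1
    _ ≤ (d + 2) + 1 := Nat.add_le_add_right (card_nbr_le p.1) 1
    _ = d + 3 := rfl

lemma card_Rf_le (hd : 1 ≤ d) {l : List (Cell d)} (hv : CellsValid d l) :
    (Rf l).card ≤ (d + 3) * nA l + nB l := by
  induction l with
  | nil => simp [nA, nB]
  | cons p l ih =>
      have hv' : CellsValid d l := fun q hq => hv q (List.mem_cons_of_mem _ hq)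
      have h1 : (Rf (p :: l)).card ≤ (cverts p).card + (Rf l).card := by
        rw [Rf_cons]
        exact Finset.card_union_le _ _
      have h2 := card_cverts_le hd hv (List.mem_cons_self)
      have h3 := ih hv'
      rw [nA_cons, nB_cons]
      by_cases h : p.2 = ∅
      · rw [if_pos h] at h2
        rw [if_pos h, if_pos h, Nat.zero_add]
        omega
      · rw [if_neg h] at h2
        rw [if_neg h, if_neg h]
        have : (d + 3) * (1 + nA l) = (d + 3) + (d + 3) * nA l := by ring
        omega

/-- The modules touched by the fault set. -/
noncomputable def FM (l : List (Cell d)) : Finset (W d) := (Rf l).image secondHalf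

lemma mem_FM_of_mem {l : List (Cell d)} {x : V d} (hx : x ∈ Rf l) :
    secondHalf x ∈ FM l := Finset.mem_image_of_mem _ hx

lemma not_mem_Rf_of_good {l : List (Cell d)} {x : V d}
    (hx : secondHalf x ∉ FM l) : x ∉ Rf l :=
  fun h => hx (mem_FM_of_mem h)

lemma card_FM_le (hd2 : 2 ≤ d) {l : List (Cell d)} (hv : CellsValid d l) :
    (FM l).card ≤ Wt l := by
  induction l with
  | nil => simp [FM]
  | cons p l ih =>
      have hv' : CellsValid d l := fun q hq => hv q (List.mem_cons_of_mem _ hq)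
      have himg : FM (p :: l) = (cverts p).image secondHalf ∪ FM l := by
        unfold FM
        rw [Rf_cons, Finset.image_union]
      have hcell : ((cverts p).image secondHalf).card ≤ cwt p := by
        by_cases h : p.2 = ∅
        · have : cverts p = {p.1} := by simp [cverts, h]
          rw [this]
          simp [cwt, h]
        · have hsub : (cverts p).image secondHalf ⊆
              {secondHalf p.1, secondHalf (extNeighbor p.1)} := by
            intro Bv hBv
            rcases Finset.mem_image.1 hBv with ⟨y, hy, rfl⟩
            rcases Finset.mem_insert.1 hy with rfl | hy'
            · exact Finset.mem_insert_self _ _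
            · rcases adj_dichotomy hd2 (hv p (List.mem_cons_self) y hy') with
                he | he
              · rw [he]
                exact Finset.mem_insert_of_mem (Finset.mem_singleton_self _)
              · rw [he]
                exact Finset.mem_insert_self _ _
          calc ((cverts p).image secondHalf).card ≤ _ := Finset.card_le_card hsub
          _ ≤ 2 := Finset.card_le_two
          _ = cwt p := by simp [cwt, h]
      calc (FM (p :: l)).card ≤ ((cverts p).image secondHalf).card + (FM l).card := by
            rw [himg]; exact Finset.card_union_le _ _
      _ ≤ cwt p + Wt l := by
            have := ih hv'
            omega
      _ = Wt (p :: l) := (Wt_cons p l).symm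

/-- The module with address `B`, as a finset. -/
noncomputable def ModF (d : ℕ) (B : W d) : Finset (V d) :=
  Finset.univ.filter (fun u => secondHalf u = B)

lemma mem_ModF {B : W d} {u : V d} : u ∈ ModF d B ↔ secondHalf u = B := by
  simp [ModF]

lemma card_ModF (hd : 1 ≤ d) (B : W d) : (ModF d B).card = 2 ^ 2 ^ (d - 1) := by
  have himg : ModF d B = Finset.univ.image (fun A : W d => concat A B) := by
    ext u
    simp only [mem_ModF, Finset.mem_image, Finset.mem_univ, true_and]
    constructor
    · intro h
      exact ⟨fh u, by rw [← h, concat_fh_sh hd]⟩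
    · rintro ⟨A, rfl⟩
      exact sh_concat hd A B
  rw [himg, Finset.card_image_of_injective _ (fun A A' h => (concat_inj hd h).1),
    Finset.card_univ]
  simp [Fintype.card_fun]

lemma aux_poly {d : ℕ} (hd : 4 ≤ d) : (d + 2) * d + 3 * d < 4 ^ d := by
  induction d, hd using Nat.le_induction with
  | base => norm_num
  | succ n hn ih =>
      have h1 := ih
      have h2 : (n + 1 + 2) * (n + 1) + 3 * (n + 1) ≤ 4 * ((n + 2) * n + 3 * n) := by
        nlinarith
      have h3 : (4 : ℕ) ^ (n + 1) = 4 * 4 ^ n := by ring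
      omega

lemma aux_2d {d : ℕ} (hd : 4 ≤ d) : 2 * d ≤ 2 ^ (d - 1) := by
  induction d, hd using Nat.le_induction with
  | base => norm_num
  | succ n hn ih =>
      have h1 := ih
      have h2 : (2 : ℕ) ^ (n + 1 - 1) = 2 * 2 ^ (n - 1) := by
        rw [show n + 1 - 1 = (n - 1) + 1 by omega, pow_succ]
        ring
      omega

lemma aux_4d (hd : 4 ≤ d) : (4 : ℕ) ^ d ≤ 2 ^ 2 ^ (d - 1) := by
  have h1 : (4 : ℕ) ^ d = 2 ^ (2 * d) := by
    rw [pow_mul]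
    norm_num
  rw [h1]
  exact Nat.pow_le_pow_right (by norm_num) (aux_2d hd)

lemma pow_pow_gt (hd2 : 2 ≤ d) {a b F : ℕ} (hab : 2 * a + b ≤ d - 1)
    (hF1 : 1 ≤ F) (hFd : F ≤ d) :
    (d + 2) * a + b + 2 * (F - 1) < 2 ^ 2 ^ (d - 1) := by
  rcases Nat.lt_or_ge d 4 with hd4 | hd4
  · interval_cases d
    · have he : (2 : ℕ) ^ 2 ^ (2 - 1) = 4 := by norm_num
      omega
    · have he : (2 : ℕ) ^ 2 ^ (3 - 1) = 16 := by norm_num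
      omega
  · have ha : a ≤ d := by omega
    have hmul : (d + 2) * a ≤ (d + 2) * d := Nat.mul_le_mul_left _ ha
    have haux := aux_poly hd4
    have h4 := aux_4d hd4
    omega

/-- Existence of a vertex in module `B`, outside the faults, whose external
neighbour lives in a fault-free module. -/
lemma exists_good_vertex (hd2 : 2 ≤ d) {l : List (Cell d)} (hv : CellsValid d l)
    (hW : Wt l ≤ d) {B : W d} (hBF : B ∈ FM l)
    (hwt : Wt (trace B l) ≤ d - 1) :
    ∃ w, secondHalf w = B ∧ w ∉ Rf l ∧ secondHalf (extNeighbor w) ∉ FM l := by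
  have hd : 1 ≤ d := by omega
  have hd1 : 1 ≤ d - 1 + 1 := by omega
  by_contra hcon
  push_neg at hcon
  -- every vertex of the module is faulty or has a bad external neighbour
  have hsub : ModF d B ⊆ ((Rf l).filter (fun w => secondHalf w = B)) ∪
      ((FM l).erase B).biUnion (fun B' => {concat B' B, concat B B}) := by
    intro w hw
    have hwB : secondHalf w = B := mem_ModF.1 hw
    by_cases hwR : w ∈ Rf l
    · exact Finset.mem_union_left _ (Finset.mem_filter.2 ⟨hwR, hwB⟩)
    · have hbad : secondHalf (extNeighbor w) ∈ FM l := hcon w hwB hwR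
      apply Finset.mem_union_right
      apply Finset.mem_biUnion.2
      refine ⟨secondHalf (extNeighbor w), Finset.mem_erase.2
        ⟨by rw [← hwB]; exact sh_ext_ne hd w, hbad⟩, ?_⟩
      -- w is one of the two canonical cross-edge endpoints
      have hw' : w = concat (fh w) B := by rw [← hwB, concat_fh_sh hd]
      by_cases hfb : fh w = B
      · have : secondHalf (extNeighbor w) = complW B := by
          conv_lhs => rw [hw', ext_concat hd, if_pos hfb]
          rw [sh_concat hd]
        rw [this] at *
        apply Finset.mem_insert_of_mem
        rw [Finset.mem_singleton, hw', hfb]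
      · have : secondHalf (extNeighbor w) = fh w := by
          conv_lhs => rw [hw', ext_concat hd, if_neg hfb]
          rw [sh_concat hd]
        rw [this]
        apply Finset.mem_insert.2
        left
        exact hw'
  have hM : (ModF d B).card = 2 ^ 2 ^ (d - 1) := card_ModF hd B
  -- bound the first part via the trace
  have hpart1 : ((Rf l).filter (fun w => secondHalf w = B)).card ≤
      (Rf (trace B l)).card := by
    apply Finset.card_le_card_of_injOn fh
    · intro w hw
      rcases Finset.mem_filter.1 hw with ⟨hw1, hw2⟩
      exact (mem_trace_iff hd2 hv hw2).2 hw1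
    · intro w hw w' hw' hww
      exact fh_inj hd (by
        rw [(Finset.mem_filter.1 hw).2, (Finset.mem_filter.1 hw').2]) hww
  have hτv : CellsValid (d - 1) (trace B l) := trace_valid hd2 hv
  have hpart1' : (Rf (trace B l)).card ≤ ((d - 1) + 3) * nA (trace B l) +
      nB (trace B l) := card_Rf_le (by omega) hτv
  have hcounts : 2 * nA (trace B l) + nB (trace B l) ≤ d - 1 := by
    rw [← wt_eq_counts]
    exact hwt
  have hpart2 : (((FM l).erase B).biUnion
      (fun B' => {concat B' B, concat B B})).card ≤ 2 * ((FM l).card - 1) := by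
    calc _ ≤ ((FM l).erase B).sum (fun B' => ({concat B' B, concat B B} :
          Finset (V d)).card) := Finset.card_biUnion_le
    _ ≤ ((FM l).erase B).sum (fun _ => 2) := by
        apply Finset.sum_le_sum
        intro i _
        exact Finset.card_le_two
    _ = 2 * ((FM l).erase B).card := by rw [Finset.sum_const, smul_eq_mul, mul_comm]
    _ = 2 * ((FM l).card - 1) := by rw [Finset.card_erase_of_mem hBF]
  have hcard := Finset.card_le_card hsub
  have hun := Finset.card_union_le ((Rf l).filter (fun w => secondHalf w = B))
      (((FM l).erase B).biUnion (fun B' => {concat B' B, concat B B}))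
  have hFM1 : 1 ≤ (FM l).card := Finset.card_pos.2 ⟨B, hBF⟩
  have hFMd : (FM l).card ≤ d := (card_FM_le hd2 hv).trans hW
  have hkey := pow_pow_gt hd2 hcounts hFM1 hFMd
  have hrw : (d - 1) + 3 = d + 2 := by omega
  rw [hrw] at hpart1'
  omega

end Dev5
section Dev5b

lemma bool_resolve {a b : Bool} (h : ¬ a = b) : b = !a := by
  cases a <;> cases b <;> simp_all

lemma V1_eq {u v : V 1} (h0 : get u 0 = get v 0) (h1 : get u 1 = get v 1) :
    u = v := by
  apply vext
  intro i
  rcases i with _ | _ | n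
  · exact h0
  · exact h1
  · rw [get_eq_false (by rw [pow_one]; omega), get_eq_false (by rw [pow_one]; omega)]

lemma get1_flip0 (u : V 1) : get (flip 0 u) 0 = !(get u 0) := by
  rw [get_flip, if_pos ⟨rfl, by rw [pow_one]; omega⟩]

lemma get1_flip0' (u : V 1) (i : ℕ) (hi : i ≠ 0) : get (flip 0 u) i = get u i := by
  rw [get_flip, if_neg (by tauto)]

lemma get1_flip1 (u : V 1) : get (flip 1 u) 1 = !(get u 1) := by
  rw [get_flip, if_pos ⟨rfl, by rw [pow_one]; omega⟩]

lemma get1_flip1' (u : V 1) (i : ℕ) (hi : i ≠ 1) : get (flip 1 u) i = get u i := by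
  rw [get_flip, if_neg (by tauto)]

lemma sameHalves1 {u : V 1} (h : get u 0 = get u 1) : sameHalves 1 u := by
  intro i hi
  have : i = 0 := by omega
  subst this
  exact h

lemma not_sameHalves1 {u : V 1} (h : ¬ get u 0 = get u 1) : ¬ sameHalves 1 u := by
  intro hs
  exact h (hs 0 (by omega))

lemma adj_d1 {u v : V 1} (h : u ≠ v) : (graph 1).Adj u v := by
  have hL : 2 * 1 ≤ 2 ^ 1 := by norm_num
  by_cases h0 : get u 0 = get v 0 <;> by_cases h1 : get u 1 = get v 1
  · exact absurd (V1_eq h0 h1) h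
  · -- flip 1
    refine Or.inl ⟨h, Or.inr (Or.inl ?_)⟩
    apply vext
    intro i
    rcases i with _ | _ | n
    · rw [get1_flip1' u 0 (by omega)]
      exact h0.symm
    · rw [get1_flip1]
      exact bool_resolve h1
    · rw [get1_flip1' u _ (by omega), get_eq_false (by rw [pow_one]; omega),
        get_eq_false (by rw [pow_one]; omega)]
  · -- flip 0
    refine Or.inl ⟨h, Or.inl ?_⟩
    apply vext
    intro i
    rcases i with _ | _ | n
    · rw [get1_flip0]
      exact bool_resolve h0
    · rw [get1_flip0' u 1 (by omega)]
      exact h1.symm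
    · rw [get1_flip0' u _ (by omega), get_eq_false (by rw [pow_one]; omega),
        get_eq_false (by rw [pow_one]; omega)]
  · -- diagonal : dsNeighbor 1
    refine Or.inl ⟨h, Or.inr (Or.inr ⟨1, le_refl 1, le_refl 1, ?_⟩)⟩
    have hpow : (2 : ℕ) ^ (1 - 1) = 1 := by norm_num
    rw [hpow]
    unfold dsNeighbor
    by_cases hs : get u 0 = get u 1
    · rw [if_pos (sameHalves1 hs)]
      apply vext
      intro i
      rw [get_compl hL]
      rcases i with _ | _ | n
      · rw [if_pos (by omega)]
        exact bool_resolve h0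
      · rw [if_pos (by omega)]
        exact bool_resolve h1
      · rw [if_neg (by omega), get_eq_false (by rw [pow_one]; omega),
          get_eq_false (by rw [pow_one]; omega)]
    · rw [if_neg (not_sameHalves1 hs)]
      apply vext
      intro i
      rw [get_swap hL]
      rcases i with _ | _ | n
      · rw [if_pos (by omega)]
        rw [bool_resolve h0, bool_resolve hs]
      · rw [if_neg (by omega), if_pos (by omega)]
        have e1 : get v 1 = !(get u 1) := bool_resolve h1
        have e2 : get u 1 = !(get u 0) := bool_resolve hs
        rw [e1, e2, Bool.not_not]
      · rw [if_neg (by omega), if_neg (by omega),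
          get_eq_false (by rw [pow_one]; omega), get_eq_false (by rw [pow_one]; omega)]

end Dev5b
section Dev6

variable {d : ℕ}

lemma Wt_trace_cons (B : W d) (p : Cell d) (l : List (Cell d)) :
    Wt (trace B (p :: l)) =
      (Option.map cwt (traceCell B p)).getD 0 + Wt (trace B l) := by
  unfold trace
  rw [List.filterMap_cons]
  cases traceCell B p <;> simp [Wt]

lemma full_trace_struct {l : List (Cell d)} {B : W d}
    (heq : Wt (trace B l) = Wt l) : ∀ p ∈ l, secondHalf p.1 = B := by
  induction l with
  | nil => simp
  | cons p l ih =>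
      have h1 := cwt_traceCell_le B p
      have h2 := Wt_trace_le B l
      rw [Wt_trace_cons, Wt_cons] at heq
      have hcell : (Option.map cwt (traceCell B p)).getD 0 = cwt p := by omega
      have hrest : Wt (trace B l) = Wt l := by omega
      intro q hq
      rcases List.mem_cons.1 hq with rfl | hq'
      · cases h : traceCell B q with
        | none =>
            rw [h] at hcell
            simp at hcell
            have := cwt_pos q
            omega
        | some c =>
            rw [h] at hcell
            simp only [Option.map_some, Option.getD_some] at hcell
            unfold traceCell at h
            split_ifs at h with hA hB
            · exact hA
            · exfalso
              cases h
              have hq2 : q.2 = ∅ := by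
                by_contra hne
                simp [cwt, hne] at hcell
              rw [hq2] at hB
              exact absurd hB.1 (Finset.notMem_empty _)
      · exact ih hrest q hq'

lemma wt_trace_other {l : List (Cell d)} {B : W d}
    (hc : ∀ p ∈ l, secondHalf p.1 ≠ B) : 2 * Wt (trace B l) ≤ Wt l := by
  induction l with
  | nil => simp [trace]
  | cons p l ih =>
      rw [Wt_trace_cons, Wt_cons]
      have hrest := ih (fun q hq => hc q (List.mem_cons_of_mem _ hq))
      have hp := hc p (List.mem_cons_self)
      have hcell : 2 * (Option.map cwt (traceCell B p)).getD 0 ≤ cwt p := by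
        unfold traceCell
        rw [if_neg hp]
        split_ifs with h2
        · have hne : p.2 ≠ ∅ := fun hh => by
            rw [hh] at h2
            exact absurd h2.1 (Finset.notMem_empty _)
          simp [cwt, hne]
        · simp
      omega

lemma ext_not_in_R (hd2 : 2 ≤ d) {l : List (Cell d)} (hv : CellsValid d l) {B : W d}
    (hcent : ∀ p ∈ l, secondHalf p.1 = B) {x : V d}
    (hx : x ∉ Rf l) (hxB : secondHalf x = B) : extNeighbor x ∉ Rf l := by
  have hd : 1 ≤ d := by omega
  intro hin
  rcases mem_Rf.1 hin with ⟨p, hp, hmem⟩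
  rcases Finset.mem_insert.1 hmem with he | he
  · apply sh_ext_ne hd x
    rw [he, hcent p hp, hxB]
  · have hadj := hv p hp _ he
    have hne : secondHalf (extNeighbor x) ≠ secondHalf p.1 := by
      rw [hcent p hp, ← hxB]
      exact sh_ext_ne hd x
    have hee := adj_cross hd2 hne hadj
    have hxp : x = p.1 := by
      have := congrArg extNeighbor hee
      rwa [ext_invol hd, ext_invol hd] at this
    exact hx (hxp ▸ center_mem_Rf hp)

lemma trace_nil_of_good {l : List (Cell d)} {B : W d} (hB : B ∉ FM l) :
    trace B l = [] := by
  unfold trace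
  rw [List.filterMap_eq_nil_iff]
  intro p hp
  have h1 : ¬ secondHalf p.1 = B := fun hsh =>
    hB (hsh ▸ mem_FM_of_mem (center_mem_Rf hp))
  have h2 : ¬ (extNeighbor p.1 ∈ p.2 ∧ secondHalf (extNeighbor p.1) = B) := by
    rintro ⟨hmem, hsh⟩
    exact hB (hsh ▸ mem_FM_of_mem (mem_Rf.2 ⟨p, hp, Finset.mem_insert_of_mem hmem⟩))
  unfold traceCell
  rw [if_neg h1, if_neg h2]

/-- The graph with a set of vertices deleted (kept on the full vertex type). -/
noncomputable def DG (d : ℕ) (R : Finset (V d)) : SimpleGraph (V d) where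
  Adj u v := (graph d).Adj u v ∧ u ∉ R ∧ v ∉ R
  symm := ⟨fun u v ⟨h, hu, hv⟩ => ⟨h.symm, hv, hu⟩⟩
  loopless := ⟨fun u ⟨h, _, _⟩ => (graph d).loopless.irrefl u h⟩

lemma DG_adj {d : ℕ} {R : Finset (V d)} {u v : V d}
    (h1 : (graph d).Adj u v) (h2 : u ∉ R) (h3 : v ∉ R) : (DG d R).Adj u v :=
  ⟨h1, h2, h3⟩

lemma module_reach (hd2 : 2 ≤ d) {l : List (Cell d)} (hv : CellsValid d l) {B : W d}
    (ihB : ∀ x y : V (d - 1), x ∉ Rf (trace B l) → y ∉ Rf (trace B l) →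
      (DG (d - 1) (Rf (trace B l))).Reachable x y)
    {x y : V d} (hxB : secondHalf x = B) (hyB : secondHalf y = B)
    (hx : x ∉ Rf l) (hy : y ∉ Rf l) :
    (DG d (Rf l)).Reachable x y := by
  have hd : 1 ≤ d := by omega
  have hx' : fh x ∉ Rf (trace B l) := fun h => hx ((mem_trace_iff hd2 hv hxB).1 h)
  have hy' : fh y ∉ Rf (trace B l) := fun h => hy ((mem_trace_iff hd2 hv hyB).1 h)
  obtain ⟨w⟩ := ihB (fh x) (fh y) hx' hy'
  have key : ∀ {A A' : V (d - 1)} (_ : (DG (d - 1) (Rf (trace B l))).Walk A A'),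
      (DG d (Rf l)).Reachable (concat A B) (concat A' B) := by
    intro A A' w
    induction w with
    | nil => exact .refl _
    | cons h p ihw =>
        obtain ⟨hadj, hA, hA'⟩ := h
        refine SimpleGraph.Reachable.trans (SimpleGraph.Adj.reachable ?_) ihw
        refine DG_adj ((adj_concat hd2 _ _ B).2 hadj) ?_ ?_
        · intro hin
          apply hA
          have := (mem_trace_iff hd2 hv (sh_concat hd _ B)).2 hin
          rwa [fh_concat hd] at this
        · intro hin
          apply hA'
          have := (mem_trace_iff hd2 hv (sh_concat hd _ B)).2 hin
          rwa [fh_concat hd] at this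
  have hkey := key w
  have e1 : concat (fh x) B = x := by rw [← hxB]; exact concat_fh_sh hd x
  have e2 : concat (fh y) B = y := by rw [← hyB]; exact concat_fh_sh hd y
  rwa [e1, e2] at hkey

/-- MAIN: removing cells of total weight at most `d` leaves `FDSC` connected. -/
theorem main_reach (d : ℕ) (hd : 1 ≤ d) :
    ∀ l : List (Cell d), CellsValid d l → Wt l ≤ d →
    ∀ x y, x ∉ Rf l → y ∉ Rf l → (DG d (Rf l)).Reachable x y := by
  induction d, hd using Nat.le_induction with
  | base =>
      intro l hv hw x y hx hy
      by_cases hxy : x = y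
      · rw [hxy]
      · exact SimpleGraph.Adj.reachable (DG_adj (adj_d1 hxy) hx hy)
  | succ n hn ih =>
      intro l hv hw x y hx hy
      have hd2 : 2 ≤ n + 1 := by omega
      have hd1 : 1 ≤ n + 1 := by omega
      have hIH : ∀ B : W (n + 1), Wt (trace B l) ≤ n →
          ∀ a b : V n, a ∉ Rf (trace B l) → b ∉ Rf (trace B l) →
          (DG n (Rf (trace B l))).Reachable a b :=
        fun B hwt => ih (trace B l) (trace_valid hd2 hv) hwt
      have reachA : ∀ B, B ∈ FM l → Wt (trace B l) ≤ n →
          ∀ z, secondHalf z = B → z ∉ Rf l →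
          ∃ z', z' ∉ Rf l ∧ secondHalf z' ∉ FM l ∧
            (DG (n + 1) (Rf l)).Reachable z z' := by
        intro B hBF hwt z hzB hz
        obtain ⟨w', hwB, hwR, hwext⟩ := exists_good_vertex hd2 hv hw hBF hwt
        have hr := module_reach hd2 hv (hIH B hwt) hzB hwB hz hwR
        refine ⟨extNeighbor w', not_mem_Rf_of_good hwext, hwext, ?_⟩
        exact hr.trans (SimpleGraph.Adj.reachable
          (DG_adj (adj_ext hd1 w') hwR (not_mem_Rf_of_good hwext)))
      have reach_blob : ∀ z, z ∉ Rf l →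
          ∃ z', z' ∉ Rf l ∧ secondHalf z' ∉ FM l ∧
            (DG (n + 1) (Rf l)).Reachable z z' := by
        intro z hz
        by_cases hB : secondHalf z ∈ FM l
        · rcases Nat.lt_or_ge (Wt (trace (secondHalf z) l)) (n + 1) with hwt | hwt
          · exact reachA _ hB (by omega) z rfl hz
          · have heq : Wt (trace (secondHalf z) l) = Wt l :=
              le_antisymm (Wt_trace_le _ _) (le_trans hw hwt)
            have hcent := full_trace_struct heq
            have hextz : extNeighbor z ∉ Rf l := ext_not_in_R hd2 hv hcent hz rfl
            by_cases hB' : secondHalf (extNeighbor z) ∈ FM l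
            · have hne : ∀ p ∈ l, secondHalf p.1 ≠ secondHalf (extNeighbor z) := by
                intro p hp
                rw [hcent p hp]
                exact fun hh => (sh_ext_ne hd1 z) hh.symm
              have h2wt := wt_trace_other hne
              have hwt' : Wt (trace (secondHalf (extNeighbor z)) l) ≤ n := by omega
              obtain ⟨z', h1, h2, h3⟩ := reachA _ hB' hwt' (extNeighbor z) rfl hextz
              exact ⟨z', h1, h2, (SimpleGraph.Adj.reachable
                (DG_adj (adj_ext hd1 z) hz hextz)).trans h3⟩
            · exact ⟨extNeighbor z, hextz, hB',
                SimpleGraph.Adj.reachable (DG_adj (adj_ext hd1 z) hz hextz)⟩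
        · exact ⟨z, hz, hB, SimpleGraph.Reachable.refl z⟩
      have hmod : ∀ B, B ∉ FM l → ∀ a b : V (n + 1), secondHalf a = B →
          secondHalf b = B → a ∉ Rf l → b ∉ Rf l →
          (DG (n + 1) (Rf l)).Reachable a b := by
        intro B hBF a b ha hb hra hrb
        have h0 : trace B l = [] := trace_nil_of_good hBF
        refine module_reach hd2 hv ?_ ha hb hra hrb
        rw [h0]
        intro a' b' _ _
        exact ih [] (fun p hp => absurd hp (List.not_mem_nil)) (by simp) a' b'
          (by simp) (by simp)
      have blob : ∀ z z', z ∉ Rf l → z' ∉ Rf l → secondHalf z ∉ FM l →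
          secondHalf z' ∉ FM l → (DG (n + 1) (Rf l)).Reachable z z' := by
        intro z z' hz hz' hB hB'
        by_cases hsame : secondHalf z = secondHalf z'
        · exact hmod _ hB z z' rfl hsame.symm hz hz'
        · set u := concat (secondHalf z') (secondHalf z) with hu
          have hu_sh : secondHalf u = secondHalf z := sh_concat hd1 _ _
          have hu_safe : u ∉ Rf l := not_mem_Rf_of_good (by rw [hu_sh]; exact hB)
          have hv_eq : extNeighbor u = concat (secondHalf z) (secondHalf z') := by
            rw [hu, ext_concat hd1, if_neg (fun hh => hsame hh.symm)]
          have hv_sh : secondHalf (extNeighbor u) = secondHalf z' := by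
            rw [hv_eq, sh_concat hd1]
          have hv_safe : extNeighbor u ∉ Rf l :=
            not_mem_Rf_of_good (by rw [hv_sh]; exact hB')
          refine ((hmod _ hB z u rfl hu_sh hz hu_safe).trans
            (SimpleGraph.Adj.reachable (DG_adj (adj_ext hd1 u) hu_safe hv_safe))).trans
            (hmod _ hB' (extNeighbor u) z' hv_sh rfl hv_safe hz')
      obtain ⟨zx, hzx1, hzx2, hzx3⟩ := reach_blob x hx
      obtain ⟨zy, hzy1, hzy2, hzy3⟩ := reach_blob y hy
      exact (hzx3.trans (blob zx zy hzx1 hzy1 hzx2 hzy2)).trans hzy3.symm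

end Dev6
section Dev7

variable {d : ℕ}

lemma Wt_le_two_length (l : List (Cell d)) : Wt l ≤ 2 * l.length := by
  induction l with
  | nil => simp
  | cons p l ih =>
      have := cwt_le_two p
      simp only [Wt_cons, List.length_cons]
      omega

lemma card_V (d : ℕ) : Fintype.card (V d) = 2 ^ 2 ^ d := by
  simp [Fintype.card_fun]

lemma card_bound (hd : 1 ≤ d) {l : List (Cell d)} (hv : CellsValid d l)
    (hW : Wt l ≤ d) : (Rf l).card + 2 ≤ 2 ^ 2 ^ d := by
  have h1 := card_Rf_le hd hv
  have h2 : 2 * nA l + nB l ≤ d := by rw [← wt_eq_counts]; exact hW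
  rcases Nat.lt_or_ge d 4 with hd4 | hd4
  · interval_cases d
    · have ha : nA l = 0 := by omega
      have : (2 : ℕ) ^ 2 ^ 1 = 4 := by norm_num
      omega
    · have : (2 : ℕ) ^ 2 ^ 2 = 16 := by norm_num
      have ha : nA l ≤ 1 := by omega
      have hb : nB l ≤ 2 := by omega
      have : (2 + 3) * nA l ≤ 5 := by omega
      omega
    · have : (2 : ℕ) ^ 2 ^ 3 = 256 := by norm_num
      have ha : nA l ≤ 1 := by omega
      have hb : nB l ≤ 3 := by omega
      have : (3 + 3) * nA l ≤ 6 := by omega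
      omega
  · have ha : nA l ≤ d := by omega
    have hb : nB l ≤ d := by omega
    have hmul : (d + 3) * nA l ≤ (d + 3) * d := Nat.mul_le_mul_left _ ha
    have he : (d + 3) * d = (d + 2) * d + d := by ring
    have haux := aux_poly hd4
    have h4 := aux_4d hd4
    have hmono : (2 : ℕ) ^ 2 ^ (d - 1) ≤ 2 ^ 2 ^ d :=
      Nat.pow_le_pow_right (by norm_num)
        (Nat.pow_le_pow_right (by norm_num) (by omega))
    omega

lemma exists_two_safe (hd : 1 ≤ d) {l : List (Cell d)} (hv : CellsValid d l)
    (hW : Wt l ≤ d) :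
    ∃ x y : V d, x ≠ y ∧ x ∉ Rf l ∧ y ∉ Rf l := by
  have hcard := card_bound hd hv hW
  have huniv : (Finset.univ : Finset (V d)).card = 2 ^ 2 ^ d := by
    rw [Finset.card_univ, card_V]
  have hle : (Rf l).card + 2 ≤ (Finset.univ : Finset (V d)).card := by omega
  have hsd : 1 < (Finset.univ \ Rf l).card := by
    have := Finset.card_sdiff_of_subset (Finset.subset_univ (Rf l))
    omega
  obtain ⟨x, hx, y, hy, hxy⟩ := Finset.one_lt_card.1 hsd
  exact ⟨x, y, hxy, (Finset.mem_sdiff.1 hx).2, (Finset.mem_sdiff.1 hy).2⟩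

lemma first_step {α : Type*} {G : SimpleGraph α} {a b : α}
    (r : G.Reachable a b) (hne : a ≠ b) : ∃ w, G.Adj a w := by
  obtain ⟨p⟩ := r
  cases p with
  | nil => exact absurd rfl hne
  | cons h _ => exact ⟨_, h⟩

/-- Every connected subgraph isomorphic to a subgraph of a star is a "cell". -/
lemma star_struct {m : ℕ} {S : (graph d).Subgraph} (hconn : S.coe.Connected)
    (hiso : ∃ H' : (star m).Subgraph, Nonempty (S.coe ≃g H'.coe)) :
    ∃ c, c ∈ S.verts ∧ ∀ y ∈ S.verts, y = c ∨ (graph d).Adj c y := by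
  obtain ⟨H', ⟨φ⟩⟩ := hiso
  have hconn' : H'.coe.Connected := (SimpleGraph.Iso.connected_iff φ).1 hconn
  have hne : Nonempty ↥S.verts := hconn.nonempty
  obtain ⟨⟨c', hc'⟩⟩ := hne
  by_cases hall : ∀ y ∈ S.verts, y = c'
  · exact ⟨c', hc', fun y hy => Or.inl (hall y hy)⟩
  · push_neg at hall
    obtain ⟨y₀, hy₀, hy₀ne⟩ := hall
    have h0 : (0 : Fin (m + 1)) ∈ H'.verts := by
      set a := φ ⟨c', hc'⟩ with ha
      set b := φ ⟨y₀, hy₀⟩ with hb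
      have hab : a ≠ b := by
        intro hh
        apply hy₀ne
        have := φ.toEquiv.injective (ha ▸ hb ▸ hh)
        exact (congrArg Subtype.val this).symm
      by_cases h0a : (a : Fin (m + 1)) = 0
      · rw [← h0a]; exact a.2
      · obtain ⟨w, hw⟩ := first_step (hconn'.preconnected a b) hab
        rcases H'.adj_sub hw with ⟨ha0, -⟩ | ⟨hw0, -⟩
        · exact absurd ha0 h0a
        · rw [← hw0]; exact w.2
    refine ⟨(φ.symm ⟨0, h0⟩).val, (φ.symm ⟨0, h0⟩).2, ?_⟩
    intro y hy
    by_cases hyc : y = (φ.symm ⟨0, h0⟩).val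
    · exact Or.inl hyc
    · right
      set a := φ ⟨y, hy⟩ with ha
      have hav : (a : Fin (m + 1)) ≠ 0 := by
        intro hh
        apply hyc
        have h1 : a = ⟨0, h0⟩ := Subtype.ext hh
        have h2 : φ.symm a = ⟨y, hy⟩ := Equiv.symm_apply_apply φ.toEquiv _
        rw [h1] at h2
        exact (congrArg Subtype.val h2).symm
      obtain ⟨w, hw⟩ := first_step (hconn'.preconnected a ⟨0, h0⟩)
        (fun hh => hav (congrArg Subtype.val hh))
      have hw0 : (w : Fin (m + 1)) = 0 := by
        rcases H'.adj_sub hw with ⟨ha0, -⟩ | ⟨hw0, -⟩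
        · exact absurd ha0 hav
        · exact hw0
      have hw_eq : w = ⟨0, h0⟩ := Subtype.ext hw0
      rw [hw_eq] at hw
      have hS : S.coe.Adj (φ.symm a) (φ.symm ⟨0, h0⟩) := φ.symm.toHom.map_adj hw
      have h2 : φ.symm a = ⟨y, hy⟩ := Equiv.symm_apply_apply φ.toEquiv _
      rw [h2] at hS
      exact (S.adj_sub hS).symm

lemma DG_walk_induce {R : Finset (V d)} :
    ∀ {x y : V d} (w : (DG d R).Walk x y) (hx : x ∈ (↑R : Set (V d))ᶜ)
      (hy : y ∈ (↑R : Set (V d))ᶜ),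
    ((graph d).induce (↑R : Set (V d))ᶜ).Reachable ⟨x, hx⟩ ⟨y, hy⟩ := by
  intro x y w
  induction w with
  | nil => intro hx hy; exact SimpleGraph.Reachable.refl _
  | @cons a b c h p ih =>
      intro hx hy
      have hb : b ∈ (↑R : Set (V d))ᶜ := by
        simpa using h.2.2
      refine SimpleGraph.Reachable.trans (SimpleGraph.Adj.reachable ?_) (ih hb hy)
      exact h.1

lemma induce_conn (hd : 1 ≤ d) {R : Finset (V d)} (hne : ∃ x, x ∉ R)
    (h : ∀ x y, x ∉ R → y ∉ R → (DG d R).Reachable x y) :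
    ((graph d).induce (↑R : Set (V d))ᶜ).Connected := by
  rw [SimpleGraph.connected_iff]
  constructor
  · intro a b
    have ha : a.val ∉ R := a.2
    have hb : b.val ∉ R := b.2
    obtain ⟨w⟩ := h a.val b.val ha hb
    have := DG_walk_induce w a.2 b.2
    simpa using this
  · exact ⟨⟨hne.choose, by simpa using hne.choose_spec⟩⟩

end Dev7
section Dev8

variable {d : ℕ}

noncomputable def cellOfSub (S : (graph d).Subgraph) (c : V d) : Cell d :=
  (c, (Set.toFinite S.verts).toFinset.erase c)

lemma cellOfSub_verts {S : (graph d).Subgraph} {c : V d} (hc : c ∈ S.verts) :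
    cverts (cellOfSub S c) = (Set.toFinite S.verts).toFinset := by
  unfold cverts cellOfSub
  exact Finset.insert_erase (by rwa [Set.Finite.mem_toFinset])

lemma family_to_cells {m : ℕ} (F : Finset (graph d).Subgraph)
    (hprop : ∀ S ∈ F, S.coe.Connected ∧
      ∃ H' : (star m).Subgraph, Nonempty (S.coe ≃g H'.coe)) :
    ∃ l : List (Cell d), CellsValid d l ∧ Wt l ≤ 2 * F.card ∧
      (↑(Rf l) : Set (V d)) = ⋃ S ∈ F, S.verts := by
  classical
  have hstar : ∀ S : (graph d).Subgraph, S ∈ F →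
      ∃ c, c ∈ S.verts ∧ ∀ y ∈ S.verts, y = c ∨ (graph d).Adj c y :=
    fun S hS => star_struct (hprop S hS).1 (hprop S hS).2
  choose ctr hctr1 hctr2 using hstar
  refine ⟨F.toList.attach.map
    (fun x => cellOfSub x.val (ctr x.val (Finset.mem_toList.1 x.2))), ?_, ?_, ?_⟩
  · intro p hp y hy
    rcases List.mem_map.1 hp with ⟨x, hx, rfl⟩
    have hS := Finset.mem_toList.1 x.2
    unfold cellOfSub at hy
    simp only [Finset.mem_erase, Set.Finite.mem_toFinset] at hy
    rcases hctr2 x.val hS y hy.2 with h | h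
    · exact absurd h hy.1
    · exact h
  · calc Wt _ ≤ 2 * (F.toList.attach.map
        (fun x => cellOfSub x.val (ctr x.val (Finset.mem_toList.1 x.2)))).length :=
          Wt_le_two_length _
    _ = 2 * F.card := by
        rw [List.length_map, List.length_attach, Finset.length_toList]
  · ext z
    simp only [Finset.mem_coe, Set.mem_iUnion]
    rw [mem_Rf]
    constructor
    · rintro ⟨p, hp, hz⟩
      rcases List.mem_map.1 hp with ⟨x, hx, rfl⟩
      have hS := Finset.mem_toList.1 x.2
      rw [cellOfSub_verts (hctr1 x.val hS), Set.Finite.mem_toFinset] at hz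
      exact ⟨x.val, hS, hz⟩
    · rintro ⟨S, hS, hz⟩
      refine ⟨cellOfSub S (ctr S hS), ?_, ?_⟩
      · apply List.mem_map.2
        refine ⟨⟨S, Finset.mem_toList.2 hS⟩, List.mem_attach _ _, rfl⟩
      · rw [cellOfSub_verts (hctr1 S hS), Set.Finite.mem_toFinset]
        exact hz

lemma no_disconnect (hd : 1 ≤ d) {l : List (Cell d)} (hv : CellsValid d l)
    (hW : Wt l ≤ d) : ¬ Disconnects (graph d) (↑(Rf l) : Set (V d)) := by
  intro hdis
  obtain ⟨x, y, hxy, hx, hy⟩ := exists_two_safe hd hv hW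
  rcases hdis with hnc | hss
  · exact hnc (induce_conn hd ⟨x, hx⟩ (main_reach d hd l hv hW))
  · exact hxy (hss (show x ∈ (↑(Rf l) : Set (V d))ᶜ from hx)
      (show y ∈ (↑(Rf l) : Set (V d))ᶜ from hy))

lemma set_nonempty (d m : ℕ) :
    {k | ∃ F : Finset (graph d).Subgraph, F.card = k ∧
      (∀ S ∈ F, S.coe.Connected ∧
        ∃ H' : (star m).Subgraph, Nonempty (S.coe ≃g H'.coe)) ∧
      Disconnects (graph d) (⋃ S ∈ F, S.verts)}.Nonempty := by
  classical
  set F₀ : Finset (graph d).Subgraph :=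
    Finset.univ.image (fun v : V d => (graph d).singletonSubgraph v) with hF₀
  refine ⟨F₀.card, F₀, rfl, ?_, ?_⟩
  · intro S hS
    rw [hF₀, Finset.mem_image] at hS
    obtain ⟨v, -, rfl⟩ := hS
    constructor
    · exact (SimpleGraph.Subgraph.singletonSubgraph_connected).coe
    · refine ⟨(star m).singletonSubgraph 0, ⟨⟨⟨fun _ => ⟨0, rfl⟩, fun _ => ⟨v, rfl⟩,
        ?_, ?_⟩, ?_⟩⟩⟩
      · intro a
        apply Subtype.ext
        have := a.2
        simpa [SimpleGraph.singletonSubgraph] using this.symm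
      · intro a
        apply Subtype.ext
        have := a.2
        simpa [SimpleGraph.singletonSubgraph] using this.symm
      · intro a b
        simp [SimpleGraph.singletonSubgraph]
        exact fun h => (h : False)
  · right
    have huniv : (⋃ S ∈ F₀, S.verts) = Set.univ := by
      ext x
      simp only [Set.mem_iUnion, Set.mem_univ, iff_true]
      refine ⟨(graph d).singletonSubgraph x, ?_, rfl⟩
      rw [hF₀, Finset.mem_image]
      exact ⟨x, Finset.mem_univ x, rfl⟩
    rw [huniv, Set.compl_univ]
    exact Set.subsingleton_empty

end Dev8
/-- `κˢ(FDSC_n; K_{1,m}) ≥ ⌊d/2⌋ + 1` for `d ≥ 1` and `2 ≤ m ≤ d + 2`. -/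
theorem stmt16 (d m : ℕ) (hd : 1 ≤ d) (hm : 2 ≤ m) (hm' : m ≤ d + 2) :
    d / 2 + 1 ≤ substructConn (graph d) (star m) := by
  unfold substructConn
  apply le_csInf (set_nonempty d m)
  intro k hk
  by_contra hlt
  push_neg at hlt
  obtain ⟨F, hcard, hprop, hdis⟩ := hk
  obtain ⟨l, hv, hW, hRf⟩ := family_to_cells F hprop
  rw [← hRf] at hdis
  refine no_disconnect hd hv ?_ hdis
  rw [hcard] at hW
  omega

end FDSC
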